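/- If each party's candidate set is computed from a superset of path conditions restricted to its own nodes, then the intersection of candidate sets over all parties equals the set of leaves whose full path conditions hold; in particular the intersection is a singleton. -/

import Mathlib

/-- A decision tree whose internal nodes carry an owner (party) of type `M`
and a Boolean split predicate on the input space `X`; leaves carry weights. -/
inductive OTree (X M : Type) where
  | leaf : ℝ → OTree X M
  | node : M → (X → Bool) → OTree X M → OTree X M → OTree X M

namespace OTree

variable {X M : Type}

/-- Full path condition of each leaf (listed left-to-right): the conjunction of
the branch conditions along the root-to-leaf path. -/
def fullConds : OTree X M → List (X → Bool)
  | .leaf _ => [fun _ => true]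
  | .node _ p l r =>
      (fullConds l).map (fun c x => (!(p x)) && c x) ++
      (fullConds r).map (fun c x => (p x) && c x)

/-- Party `m`'s local path condition of each leaf: the conjunction of branch
conditions restricted to nodes owned by `m`. -/
def condsFor [DecidableEq M] (m : M) : OTree X M → List (X → Bool)
  | .leaf _ => [fun _ => true]
  | .node o p l r =>
      ((condsFor m l).map (fun c x => (if o = m then !(p x) else true) && c x)) ++
      ((condsFor m r).map (fun c x => (if o = m then p x else true) && c x))

/-- Leaf weights, listed left-to-right. -/
def weights : OTree X M → List ℝ
  | .leaf w => [w]
  | .node _ _ l r => weights l ++ weights r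

/-- Standard recursive evaluation of a decision tree. -/
def eval : OTree X M → X → ℝ
  | .leaf w, _ => w
  | .node _ p l r, x => if p x then r.eval x else l.eval x

/-- Party `m`'s candidate set of leaves (by index) for input `x`. -/
def cand [DecidableEq M] (t : OTree X M) (m : M) (x : X) : Set ℕ :=
  {i | i < (condsFor m t).length ∧ ((condsFor m t).getD i (fun _ => false)) x = true}

/-- The set of leaves (by index) whose full path condition is satisfied by `x`
(the leaf actually reached by `x`). -/
def reach (t : OTree X M) (x : X) : Set ℕ :=
  {i | i < (fullConds t).length ∧ ((fullConds t).getD i (fun _ => false)) x = true}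

end OTree

/-! Record each root-to-leaf path as the list of its (owner, branch literal) pairs. The full path
condition is the conjunction of all literals on the path and party `m`'s local condition the
conjunction of those it owns; since every literal has an owner, the local conditions hold jointly
exactly when the full one does. Exactly one full path condition holds at `x`: the one of the leaf
reached by descending from the root. -/

theorem List.getD_map_apply_eq_true_iff {α X : Type*} (l : List α) (f : α → X → Bool) (i : ℕ)
    (x : X) :
    (i < (l.map f).length ∧ (l.map f).getD i (fun _ => false) x = true) ↔
      ∃ a, l[i]? = some a ∧ f a x = true := by
  rw [List.getD_eq_getElem?_getD, List.getElem?_map]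
  cases h : l[i]? with
  | none => simp
  | some a => simp [(List.getElem?_eq_some_iff.mp h).1]

theorem List.forall_all_filter_fst_eq_iff {α β : Type*} [DecidableEq α] (l : List (α × β))
    (f : α × β → Bool) : (∀ a, (l.filter (·.1 = a)).all f = true) ↔ l.all f = true := by
  simp only [List.all_eq_true, List.mem_filter, decide_eq_true_eq]
  exact ⟨fun h q hq => h q.1 q ⟨hq, rfl⟩, fun h _ q hq => h q hq.1⟩

namespace OTree

variable {X M : Type}

def paths : OTree X M → List (List (M × (X → Bool)))
  | .leaf _ => [[]]
  | .node o p l r =>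
      (paths l).map (List.cons (o, fun x => !(p x))) ++ (paths r).map (List.cons (o, p))

def leafIndex : OTree X M → X → ℕ
  | .leaf _, _ => 0
  | .node _ p l r, x => if p x then (paths l).length + leafIndex r x else leafIndex l x

theorem fullConds_eq_map_paths (t : OTree X M) :
    fullConds t = (paths t).map fun π x => π.all (·.2 x) := by
  induction t with
  | leaf => rfl
  | node o p l r ihl ihr =>
    simp only [fullConds, paths, ihl, ihr, List.map_append, List.map_map]
    rfl

theorem condsFor_eq_map_paths [DecidableEq M] (m : M) (t : OTree X M) :
    condsFor m t = (paths t).map fun π x => (π.filter (·.1 = m)).all (·.2 x) := by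
  induction t with
  | leaf => rfl
  | node o p l r ihl ihr =>
    simp only [condsFor, paths, ihl, ihr, List.map_append, List.map_map]
    congr 2 <;> funext π x <;> by_cases h : o = m <;> simp [h]

theorem mem_cand_iff [DecidableEq M] (t : OTree X M) (m : M) (x : X) (i : ℕ) :
    i ∈ t.cand m x ↔ ∃ π, (paths t)[i]? = some π ∧ (π.filter (·.1 = m)).all (·.2 x) = true := by
  rw [cand, Set.mem_ofPred_eq, condsFor_eq_map_paths, List.getD_map_apply_eq_true_iff]

theorem mem_reach_iff (t : OTree X M) (x : X) (i : ℕ) :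
    i ∈ t.reach x ↔ ∃ π, (paths t)[i]? = some π ∧ π.all (·.2 x) = true := by
  rw [reach, Set.mem_ofPred_eq, fullConds_eq_map_paths, List.getD_map_apply_eq_true_iff]

theorem iInter_cand_eq_reach [DecidableEq M] [Nonempty M] (t : OTree X M) (x : X) :
    (⋂ m : M, t.cand m x) = t.reach x := by
  ext i
  simp only [Set.mem_iInter, mem_cand_iff, mem_reach_iff]
  cases (paths t)[i]? with
  | none => simp
  | some π => simpa using π.forall_all_filter_fst_eq_iff fun q => q.2 x

theorem leafIndex_lt_length_paths (t : OTree X M) (x : X) : leafIndex t x < (paths t).length := by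
  induction t with
  | leaf => simp [leafIndex, paths]
  | node o p l r ihl ihr =>
    simp only [leafIndex, paths, List.length_append, List.length_map]
    split <;> omega

theorem exists_paths_getElem?_all_iff (t : OTree X M) (x : X) (i : ℕ) :
    (∃ π, (paths t)[i]? = some π ∧ π.all (·.2 x) = true) ↔ i = leafIndex t x := by
  induction t generalizing i with
  | leaf => cases i <;> simp [paths, leafIndex]
  | node o p l r ihl ihr =>
    have := leafIndex_lt_length_paths l x
    simp only [paths, List.getElem?_append, List.getElem?_map, List.length_map, leafIndex]
    split_ifs with hi hp hp <;>
      simp only [Option.map_eq_some_iff, exists_exists_and_eq_and, List.all_cons,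
        Bool.and_eq_true, hp, Bool.not_true, Bool.not_false, Bool.false_eq_true, false_and,
        and_false, exists_false, false_iff, true_and, ihl, ihr] <;>
      omega

theorem reach_eq_singleton_leafIndex (t : OTree X M) (x : X) : t.reach x = {leafIndex t x} := by
  ext i
  rw [mem_reach_iff, exists_paths_getElem?_all_iff, Set.mem_singleton_iff]

end OTree

/-- The intersection of the parties' candidate sets equals the set of leaves
whose full path conditions hold; in particular the intersection is a
singleton. -/
theorem inter_cand_singleton {X M : Type} [DecidableEq M] [Nonempty M]
    (t : OTree X M) (x : X) :
    (⋂ m : M, t.cand m x) = t.reach x ∧ ∃! i : ℕ, i ∈ ⋂ m : M, t.cand m x := by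
  rw [OTree.iInter_cand_eq_reach, OTree.reach_eq_singleton_leafIndex]
  exact ⟨rfl, t.leafIndex x, rfl, fun _ hi => hi⟩
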